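/- Let t, s, d, k be positive integers with 1 ≤ k ≤ d. Let D be a finite set of k-dimensional linear subspaces of ℝ^d that forms an equal-weight tight t-fusion frame, and for each V ∈ D let Y_V be a finite set of unit vectors in V that is a spherical s-design on the unit sphere of V (in the moment form: for every y ∈ ℝ^d and every integer 0 ≤ m ≤ s, ∑_{z∈Y_V} ⟨z, P_V y⟩^m equals |Y_V|·((1/2)_{m/2}/(k/2)_{m/2})·‖P_V y‖^m when m is even and 0 when m is odd), such that n := |Y_V| is independent of V. Set r := min{s, 2t+1}. Then the multiset Z obtained as the union of the Y_V over V ∈ D is a spherical r-design on S^{d−1}: for every y ∈ ℝ^d and every integer 0 ≤ ℓ ≤ r, ∑_{V∈D} ∑_{z∈Y_V} ⟨z, y⟩^ℓ equals |D|·n·((1/2)_{ℓ/2}/(d/2)_{ℓ/2})·‖y‖^ℓ when ℓ is even and 0 when ℓ is odd. -/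

import Mathlib

open scoped RealInnerProductSpace BigOperators

/-- Orthogonal projection onto a subspace `V` of `ℝ^d`, as a linear endomorphism. -/
noncomputable def proj {d : ℕ} (V : Submodule ℝ (EuclideanSpace ℝ (Fin d))) :
    EuclideanSpace ℝ (Fin d) →ₗ[ℝ] EuclideanSpace ℝ (Fin d) :=
  V.subtype ∘ₗ (V.orthogonalProjection).toLinearMap

/-- The Pochhammer symbol `(a)_n = a(a+1)⋯(a+n−1)`. -/
noncomputable def poch (a : ℝ) (n : ℕ) : ℝ := (ascPochhammer ℝ n).eval a

/-!
Pairing `z ∈ Y_V ⊆ V` with `y` only sees `P_V y`, so the design property of `Y_V` turns the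
`ℓ`-th moment of the union into a multiple of `∑_V ‖P_V y‖^ℓ`, and kills it for odd `ℓ`.
For `ℓ = 2m` it remains to evaluate the frame sum in degree `m ≤ t`. The degree-`t` identity
descends: restricting the degree-`(m+1)` identity to a line `x + r u`, taking the coefficient
of `r²` and summing over an orthonormal basis of directions `u` (i.e. applying the Laplacian)
gives `(k + 2m) ∑_V ‖P_V x‖^{2m} = A (d + 2m) ‖x‖^{2m}`, since `∑_i ‖P_V e_i‖² = tr P_V = k`.
So every degree `m ≤ t` is tight, and going up from degree `0`, where the constant is `|D|`,
the constant in degree `m` is `|D| (k/2)_m / (d/2)_m`.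
-/

open Polynomial Module Finset

section QuadraticPow

variable {R : Type*} [CommSemiring R] (a b c : R)

lemma coeff_zero_quadratic_pow (n : ℕ) :
    ((C a + C b * X + C c * X ^ 2) ^ n).coeff 0 = a ^ n := by
  simp [coeff_zero_eq_eval_zero]

lemma coeff_one_quadratic_mul (q : R[X]) :
    ((C a + C b * X + C c * X ^ 2) * q).coeff 1 = a * q.coeff 1 + b * q.coeff 0 := by
  simp [add_mul, mul_assoc, coeff_X_mul, coeff_X_pow_mul']

lemma coeff_quadratic_mul (q : R[X]) (n : ℕ) :
    ((C a + C b * X + C c * X ^ 2) * q).coeff (n + 2) =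
      a * q.coeff (n + 2) + b * q.coeff (n + 1) + c * q.coeff n := by
  simp only [add_mul, mul_assoc, coeff_add, coeff_C_mul, coeff_X_mul, coeff_X_pow_mul]

lemma coeff_one_quadratic_pow (n : ℕ) :
    ((C a + C b * X + C c * X ^ 2) ^ (n + 1)).coeff 1 = (n + 1) * a ^ n * b := by
  induction n with
  | zero => simp [coeff_C]
  | succ n ih =>
    rw [pow_succ', coeff_one_quadratic_mul, ih, coeff_zero_quadratic_pow]
    push_cast
    ring

lemma coeff_two_quadratic_pow (n : ℕ) :
    ((C a + C b * X + C c * X ^ 2) ^ (n + 2)).coeff 2 =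
      (n + 2) * a ^ (n + 1) * c + (n + 2).choose 2 * a ^ n * b ^ 2 := by
  induction n with
  | zero =>
    rw [pow_two, coeff_quadratic_mul (n := 0)]
    simp [coeff_C, coeff_X]
    ring
  | succ n ih =>
    rw [pow_succ', coeff_quadratic_mul (n := 0), ih, coeff_one_quadratic_pow,
      coeff_zero_quadratic_pow, Nat.choose_succ_succ' (n + 2), Nat.choose_one_right]
    push_cast
    ring

end QuadraticPow

variable {E : Type*} [NormedAddCommGroup E] [InnerProductSpace ℝ E]

noncomputable def normSqLine (x u : E) : ℝ[X] :=
  C (‖x‖ ^ 2) + C (2 * ⟪x, u⟫) * X + C (‖u‖ ^ 2) * X ^ 2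

lemma eval_normSqLine (x u : E) (r : ℝ) : (normSqLine x u).eval r = ‖x + r • u‖ ^ 2 := by
  rw [normSqLine, norm_add_sq_real, real_inner_smul_right, norm_smul, Real.norm_eq_abs, mul_pow,
    sq_abs]
  simp only [eval_add, eval_mul, eval_pow, eval_C, eval_X]
  ring

variable [FiniteDimensional ℝ E]

section Projection

variable {ι : Type*} [Fintype ι] (V : Submodule ℝ E) (b : OrthonormalBasis ι ℝ E)

lemma sum_norm_starProjection_sq :
    ∑ i, ‖V.starProjection (b i)‖ ^ 2 = finrank ℝ V := by
  have hproj : LinearMap.IsProj V (V.starProjection : E →ₗ[ℝ] E) :=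
    ⟨V.starProjection_apply_mem, fun _ hx => V.starProjection_eq_self_iff.mpr hx⟩
  rw [← hproj.trace, LinearMap.trace_eq_sum_inner _ b]
  refine Fintype.sum_congr _ _ fun i => ?_
  have hidem := V.starProjection_eq_self_iff.mpr (V.starProjection_apply_mem (b i))
  rw [ContinuousLinearMap.coe_coe, ← hidem, ← V.inner_starProjection_left_eq_right, hidem,
    real_inner_self_eq_norm_sq]

lemma sum_inner_starProjection_sq (x : E) :
    ∑ i, ⟪V.starProjection x, V.starProjection (b i)⟫ ^ 2 = ‖V.starProjection x‖ ^ 2 := by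
  simp_rw [← V.inner_starProjection_left_eq_right,
    V.starProjection_eq_self_iff.mpr (V.starProjection_apply_mem x), b.sum_sq_inner_left]

lemma sum_coeff_two_normSqLine_starProjection_pow (x : E) (m : ℕ) :
    ∑ i, ((normSqLine (V.starProjection x) (V.starProjection (b i))) ^ (m + 1)).coeff 2 =
      (m + 1) * (finrank ℝ V + 2 * m) * ‖V.starProjection x‖ ^ (2 * m) := by
  cases m with
  | zero =>
    simp only [zero_add, pow_one, normSqLine, coeff_add, coeff_C_mul, coeff_C, coeff_X, coeff_X_pow]
    simp [sum_norm_starProjection_sq]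
  | succ m =>
    simp only [normSqLine, coeff_two_quadratic_pow, sum_add_distrib, ← mul_sum, mul_pow,
      sum_inner_starProjection_sq, sum_norm_starProjection_sq, Nat.cast_choose_two]
    rw [pow_mul]
    push_cast
    ring

end Projection

lemma sum_norm_starProjection_pow_of_succ {k m : ℕ} (D : Finset (Submodule ℝ E))
    (hdim : ∀ V ∈ D, finrank ℝ V = k) (B : ℝ)
    (h : ∀ x : E, ∑ V ∈ D, ‖V.starProjection x‖ ^ (2 * (m + 1)) = B * ‖x‖ ^ (2 * (m + 1)))
    (x : E) :
    (k + 2 * m) * ∑ V ∈ D, ‖V.starProjection x‖ ^ (2 * m) =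
      B * ((finrank ℝ E + 2 * m) * ‖x‖ ^ (2 * m)) := by
  set b := stdOrthonormalBasis ℝ E
  have hpoly (i) : ∑ V ∈ D, normSqLine (V.starProjection x) (V.starProjection (b i)) ^ (m + 1) =
      C B * normSqLine x (b i) ^ (m + 1) := by
    refine Polynomial.funext fun r => ?_
    simp only [eval_finsetSum, eval_mul, eval_C, eval_pow, eval_normSqLine, ← map_smul, ← map_add,
      ← pow_mul, h]
  have htop := sum_coeff_two_normSqLine_starProjection_pow ⊤ b x m
  simp only [Submodule.starProjection_top, finrank_top, ContinuousLinearMap.id_apply] at htop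
  refine mul_left_cancel₀ (show (m + 1 : ℝ) ≠ 0 by positivity) ?_
  calc (m + 1) * ((k + 2 * m) * ∑ V ∈ D, ‖V.starProjection x‖ ^ (2 * m))
      = ∑ V ∈ D, ∑ i,
          (normSqLine (V.starProjection x) (V.starProjection (b i)) ^ (m + 1)).coeff 2 := by
        rw [mul_sum, mul_sum]
        refine sum_congr rfl fun V hV => ?_
        rw [sum_coeff_two_normSqLine_starProjection_pow, hdim V hV]
        ring
    _ = ∑ i, (C B * normSqLine x (b i) ^ (m + 1)).coeff 2 := by
        rw [sum_comm]
        simp only [← finsetSum_coeff, hpoly]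
    _ = (m + 1) * (B * ((finrank ℝ E + 2 * m) * ‖x‖ ^ (2 * m))) := by
        simp only [coeff_C_mul, ← mul_sum, htop]
        ring

lemma poch_succ (a : ℝ) (n : ℕ) : poch a (n + 1) = poch a n * (a + n) :=
  ascPochhammer_succ_eval n a

lemma poch_pos {a : ℝ} (ha : 0 < a) (n : ℕ) : 0 < poch a n :=
  ascPochhammer_pos n a ha

def IsTightFusionFrame (D : Finset (Submodule ℝ E)) (t : ℕ) : Prop :=
  ∃ A : ℝ, ∀ x : E, ∑ V ∈ D, ‖V.starProjection x‖ ^ (2 * t) = A * ‖x‖ ^ (2 * t)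

namespace IsTightFusionFrame

variable {D : Finset (Submodule ℝ E)} {k t : ℕ}

lemma of_succ (hk : 0 < k) (hdim : ∀ V ∈ D, finrank ℝ V = k)
    (h : IsTightFusionFrame D (t + 1)) : IsTightFusionFrame D t := by
  obtain ⟨B, hB⟩ := h
  refine ⟨B * (finrank ℝ E + 2 * t) / (k + 2 * t), fun x => ?_⟩
  rw [div_mul_eq_mul_div, eq_div_iff (by positivity : (0 : ℝ) < k + 2 * t).ne', mul_comm,
    sum_norm_starProjection_pow_of_succ D hdim B hB]
  ring

lemma of_le (hk : 0 < k) (hdim : ∀ V ∈ D, finrank ℝ V = k) (h : IsTightFusionFrame D t)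
    {m : ℕ} (hm : m ≤ t) : IsTightFusionFrame D m :=
  Nat.decreasingInduction (fun _ _ => of_succ hk hdim) h hm

lemma sum_norm_starProjection_pow (hk : 0 < k) (hE : 0 < finrank ℝ E)
    (hdim : ∀ V ∈ D, finrank ℝ V = k) (h : IsTightFusionFrame D t) {m : ℕ} (hm : m ≤ t) (x : E) :
    ∑ V ∈ D, ‖V.starProjection x‖ ^ (2 * m) =
      #D * (poch (k / 2) m / poch (finrank ℝ E / 2) m) * ‖x‖ ^ (2 * m) := by
  induction m generalizing x with
  | zero => simp [poch]
  | succ m ih =>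
    obtain ⟨B, hB⟩ := h.of_le hk hdim hm
    have : Nontrivial E := nontrivial_of_finrank_pos hE
    obtain ⟨u, hu⟩ := exists_norm_eq E zero_le_one
    have hBu := sum_norm_starProjection_pow_of_succ D hdim B hB u
    rw [ih (by omega), hu] at hBu
    have hpoch := poch_pos (a := finrank ℝ E / 2) (by positivity) m
    have hB' : B = #D * (poch (k / 2) (m + 1) / poch (finrank ℝ E / 2) (m + 1)) := by
      rw [poch_succ, poch_succ]
      field_simp at hBu ⊢
      linear_combination -hBu
    rw [hB x, hB']

end IsTightFusionFrame

lemma proj_apply {d : ℕ} (V : Submodule ℝ (EuclideanSpace ℝ (Fin d)))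
    (x : EuclideanSpace ℝ (Fin d)) : proj V x = V.starProjection x :=
  rfl

theorem stmt2_general (t s d k : ℕ) (hk : 0 < k) (hkd : k ≤ d)
    (D : Finset (Submodule ℝ (EuclideanSpace ℝ (Fin d))))
    (hdim : ∀ V ∈ D, Module.finrank ℝ V = k)
    (htff : ∃ A : ℝ, 0 < A ∧ ∀ x : EuclideanSpace ℝ (Fin d),
      ∑ V ∈ D, ‖proj V x‖ ^ (2 * t) = A * ‖x‖ ^ (2 * t))
    (Y : Submodule ℝ (EuclideanSpace ℝ (Fin d)) → Finset (EuclideanSpace ℝ (Fin d)))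
    (hY : ∀ V ∈ D, ∀ z ∈ Y V, z ∈ V ∧ ‖z‖ = 1)
    (n : ℕ)
    (hdesign : ∀ V ∈ D, ∀ y : EuclideanSpace ℝ (Fin d), ∀ m : ℕ, m ≤ s →
      ∑ z ∈ Y V, ⟪z, proj V y⟫ ^ m =
        if Even m then
          (n : ℝ) * (poch (1 / 2) (m / 2) / poch ((k : ℝ) / 2) (m / 2)) * ‖proj V y‖ ^ m
        else 0) :
    ∀ y : EuclideanSpace ℝ (Fin d), ∀ l : ℕ, l ≤ min s (2 * t + 1) →
      ∑ V ∈ D, ∑ z ∈ Y V, ⟪z, y⟫ ^ l =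
        if Even l then
          (D.card : ℝ) * (n : ℝ) *
            (poch (1 / 2) (l / 2) / poch ((d : ℝ) / 2) (l / 2)) * ‖y‖ ^ l
        else 0 := by
  intro y l hl
  have hframe : IsTightFusionFrame D t := by
    obtain ⟨A, -, hA⟩ := htff
    exact ⟨A, hA⟩
  have hd : 0 < finrank ℝ (EuclideanSpace ℝ (Fin d)) := by
    rw [finrank_euclideanSpace_fin]
    omega
  have hY_proj (V) (hV : V ∈ D) : ∑ z ∈ Y V, ⟪z, y⟫ ^ l = ∑ z ∈ Y V, ⟪z, proj V y⟫ ^ l :=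
    sum_congr rfl fun z hz => by
      rw [proj_apply, ← V.inner_starProjection_left_eq_right,
        V.starProjection_eq_self_iff.mpr (hY V hV z hz).1]
  rw [sum_congr rfl fun V hV =>
    (hY_proj V hV).trans (hdesign V hV y l (hl.trans (min_le_left _ _)))]
  split_ifs with hl_even
  · obtain ⟨m, rfl⟩ := hl_even
    rw [show (m + m) / 2 = m by omega, ← two_mul, ← mul_sum]
    simp_rw [proj_apply]
    rw [hframe.sum_norm_starProjection_pow hk hd hdim (by omega) y, finrank_euclideanSpace_fin]
    have hpoch_k := poch_pos (half_pos (Nat.cast_pos.mpr hk)) m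
    have hpoch_d := poch_pos (half_pos (Nat.cast_pos.mpr (hk.trans_le hkd))) m
    field_simp
  · simp

/-- Corollary: lifting equal-weight spherical designs through an
equal-weight tight `t`-fusion frame.  If `D ⊆ G_{k,d}` is an equal-weight tight
`t`-fusion frame and each `Y_V ⊆ S(V)` is a spherical `s`-design (moment form) with
`|Y_V| = n` independent of `V`, then the union multiset satisfies the spherical
design moment identities on `S^{d−1}` up to degree `r = min {s, 2t+1}`. -/
theorem stmt2 (t s d k : ℕ) (ht : 0 < t) (hs : 0 < s) (hk : 0 < k) (hkd : k ≤ d)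
    (D : Finset (Submodule ℝ (EuclideanSpace ℝ (Fin d))))
    (hdim : ∀ V ∈ D, Module.finrank ℝ V = k)
    (htff : ∃ A : ℝ, 0 < A ∧ ∀ x : EuclideanSpace ℝ (Fin d),
      ∑ V ∈ D, ‖proj V x‖ ^ (2 * t) = A * ‖x‖ ^ (2 * t))
    (Y : Submodule ℝ (EuclideanSpace ℝ (Fin d)) → Finset (EuclideanSpace ℝ (Fin d)))
    (hY : ∀ V ∈ D, ∀ z ∈ Y V, z ∈ V ∧ ‖z‖ = 1)
    (n : ℕ) (hcard : ∀ V ∈ D, (Y V).card = n)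
    (hdesign : ∀ V ∈ D, ∀ y : EuclideanSpace ℝ (Fin d), ∀ m : ℕ, m ≤ s →
      ∑ z ∈ Y V, ⟪z, proj V y⟫ ^ m =
        if Even m then
          (n : ℝ) * (poch (1 / 2) (m / 2) / poch ((k : ℝ) / 2) (m / 2)) * ‖proj V y‖ ^ m
        else 0) :
    ∀ y : EuclideanSpace ℝ (Fin d), ∀ l : ℕ, l ≤ min s (2 * t + 1) →
      ∑ V ∈ D, ∑ z ∈ Y V, ⟪z, y⟫ ^ l =
        if Even l then
          (D.card : ℝ) * (n : ℝ) *
            (poch (1 / 2) (l / 2) / poch ((d : ℝ) / 2) (l / 2)) * ‖y‖ ^ l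
        else 0 :=
  stmt2_general t s d k hk hkd D hdim htff Y hY n hdesign
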